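/- Let (A,φ) be an F_p-algebra with Frobenius splitting and (f,c) ∈ W_2^φ(A) a lift of f ∈ A. Then the natural homomorphism from the localization W_2^φ(A)_{(f,c)} to W_2^φ(A_f) is an isomorphism. -/

import Mathlib

/-- A type-level copy of `A × A`, the underlying set of twisted Witt vectors. -/
structure WittPair (A : Type*) where
  fst : A
  snd : A

/-- The value in `A` of the integral polynomial `P(a,b) = ((a+b)^p − a^p − b^p)/p`,
written via binomial coefficients: `P(a,b) = Σ_{0<i<p} (C(p,i)/p) a^i b^{p-i}`. -/
def wittP (p : ℕ) {A : Type*} [CommRing A] (a b : A) : A :=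
  ∑ i ∈ Finset.Ioo 0 p, ((p.choose i / p : ℕ) : A) * a ^ i * b ^ (p - i)

/-- `inst` is the twisted Witt ring structure `W₂^φ(A)` on `A × A`. -/
def IsTwistedWittRing {A : Type*} [CommRing A] (p : ℕ) (φ : A → A)
    (inst : CommRing (WittPair A)) : Prop :=
  letI := inst
  (∀ x y : WittPair A,
      x + y = ⟨x.fst + y.fst, x.snd + y.snd - φ (wittP p x.fst y.fst)⟩) ∧
  (∀ x y : WittPair A,
      x * y = ⟨x.fst * y.fst, x.fst * y.snd + y.fst * x.snd⟩) ∧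
  (1 : WittPair A) = ⟨1, 0⟩

/-! In `W₂^φ`, a pair `(u, v)` is a unit as soon as `u` is, and the powers of `(f, c)` are
`(f^(n+1), (n+1) f^n c)`. Hence `(f, c)` becomes invertible in `W₂^{φ'}(A_f)`, and writing
`(u, v) = (a, b)/f^n` with a common denominator exhibits `(u, v)` as
`(a f, (n+1) a c + f b) / (f, c)^(n+1)`; two pairs identified in `A_f` are identified after
multiplying by a power of `(f, c)` for the same reason. -/

attribute [ext] WittPair

theorem map_wittP {A B : Type*} [CommRing A] [CommRing B] (g : A →+* B) (p : ℕ) (a b : A) :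
    g (wittP p a b) = wittP p (g a) (g b) := by
  simp [wittP, map_sum]

namespace IsTwistedWittRing

variable {p : ℕ} {A B : Type*} [CommRing A] [CommRing B] {φ : A → A} {φ' : B → B}
  [instA : CommRing (WittPair A)] [instB : CommRing (WittPair B)]

theorem add_eq (hA : IsTwistedWittRing p φ instA) (x y : WittPair A) :
    x + y = ⟨x.fst + y.fst, x.snd + y.snd - φ (wittP p x.fst y.fst)⟩ :=
  hA.1 x y

theorem mul_eq (hA : IsTwistedWittRing p φ instA) (x y : WittPair A) :
    x * y = ⟨x.fst * y.fst, x.fst * y.snd + y.fst * x.snd⟩ :=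
  hA.2.1 x y

theorem one_eq (hA : IsTwistedWittRing p φ instA) : (1 : WittPair A) = ⟨1, 0⟩ :=
  hA.2.2

theorem mk_pow_succ (hA : IsTwistedWittRing p φ instA) (f c : A) (n : ℕ) :
    (⟨f, c⟩ : WittPair A) ^ (n + 1) = ⟨f ^ (n + 1), ((n : A) + 1) * f ^ n * c⟩ := by
  induction n with
  | zero => ext <;> simp
  | succ n ih =>
    rw [pow_succ, ih, hA.mul_eq]
    ext <;> simp only [Nat.cast_succ] <;> ring

theorem isUnit_mk (hA : IsTwistedWittRing p φ instA) {u : A} (hu : IsUnit u) (v : A) :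
    IsUnit (⟨u, v⟩ : WittPair A) := by
  obtain ⟨w, hw⟩ := hu.exists_right_inv
  refine .of_mul_eq_one ⟨w, -(w * w * v)⟩ ?_
  rw [hA.mul_eq, hA.one_eq]
  ext
  · exact hw
  · linear_combination (-(w * v)) * hw

theorem mk_pow_succ_mul_eq (hA : IsTwistedWittRing p φ instA) (f c : A) {m : ℕ}
    {x y : WittPair A} (h₁ : f ^ m * x.fst = f ^ m * y.fst)
    (h₂ : f ^ m * x.snd = f ^ m * y.snd) :
    (⟨f, c⟩ : WittPair A) ^ (m + 1) * x = ⟨f, c⟩ ^ (m + 1) * y := by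
  rw [hA.mk_pow_succ, hA.mul_eq, hA.mul_eq]
  ext
  · linear_combination f * h₁
  · linear_combination f * h₂ + ((m : A) + 1) * c * h₁

def map (hA : IsTwistedWittRing p φ instA) (hB : IsTwistedWittRing p φ' instB) (ι : A →+* B)
    (hι : ∀ a, φ' (ι a) = ι (φ a)) : WittPair A →+* WittPair B :=
  .mk' { toFun x := ⟨ι x.fst, ι x.snd⟩
         map_one' := by rw [hA.one_eq, hB.one_eq]; ext <;> simp
         map_mul' x y := by rw [hA.mul_eq, hB.mul_eq]; ext <;> simp }
    fun x y => by
      rw [hA.add_eq, hB.add_eq]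
      ext <;> simp [← map_wittP, hι]

theorem isLocalization_away [Algebra A B] (f c : A) [IsLocalization.Away f B]
    (hA : IsTwistedWittRing p φ instA) (hB : IsTwistedWittRing p φ' instB)
    (hι : ∀ a, φ' (algebraMap A B a) = algebraMap A B (φ a)) :
    letI := (hA.map hB (algebraMap A B) hι).toAlgebra
    IsLocalization.Away (⟨f, c⟩ : WittPair A) (WittPair B) := by
  let := (hA.map hB (algebraMap A B) hι).toAlgebra
  have algebraMap_eq (x : WittPair A) :
      algebraMap (WittPair A) (WittPair B) x = ⟨algebraMap A B x.fst, algebraMap A B x.snd⟩ :=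
    rfl
  refine IsLocalization.Away.mk _ ?_ (fun ⟨u, v⟩ => ?_) (fun x y hxy => ?_)
  · exact hB.isUnit_mk (IsLocalization.Away.algebraMap_isUnit f) _
  · obtain ⟨a, b, ⟨-, n, rfl⟩, ha, hb⟩ := IsLocalization.surj₂ (.powers f) (S := B) u v
    refine ⟨n + 1, ⟨a * f, ((n : A) + 1) * a * c + f * b⟩, ?_⟩
    rw [← map_pow, hA.mk_pow_succ, algebraMap_eq, algebraMap_eq, hB.mul_eq]
    simp only [map_pow, map_mul, map_add, map_natCast, map_one] at ha hb ⊢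
    ext
    · linear_combination algebraMap A B f * ha
    · linear_combination ((n : B) + 1) * algebraMap A B c * ha + algebraMap A B f * hb
  · rw [algebraMap_eq, algebraMap_eq, WittPair.mk.injEq] at hxy
    obtain ⟨m₁, hm₁⟩ := IsLocalization.Away.exists_of_eq f hxy.1
    obtain ⟨m₂, hm₂⟩ := IsLocalization.Away.exists_of_eq f hxy.2
    refine ⟨m₁ + m₂ + 1, hA.mk_pow_succ_mul_eq f c ?_ ?_⟩
    · linear_combination f ^ m₂ * hm₁
    · linear_combination f ^ m₁ * hm₂

end IsTwistedWittRing

theorem twistedWittRing_localization_iso_general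
    (p : ℕ) (A : Type*) [CommRing A]
    (φ : A → A)
    (f c : A)
    (inst : CommRing (WittPair A)) (hinst : IsTwistedWittRing p φ inst)
    (φ' : Localization.Away f → Localization.Away f)
    (hcompat : ∀ a : A,
      φ' (algebraMap A (Localization.Away f) a) = algebraMap A (Localization.Away f) (φ a))
    (inst' : CommRing (WittPair (Localization.Away f)))
    (hinst' : IsTwistedWittRing p φ' inst') :
    letI := inst
    letI := inst'
    ∃ e : Localization.Away (⟨f, c⟩ : WittPair A) ≃+* WittPair (Localization.Away f),
      ∀ x : WittPair A,
        e (algebraMap (WittPair A) (Localization.Away (⟨f, c⟩ : WittPair A)) x) =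
          ⟨algebraMap A (Localization.Away f) x.fst,
            algebraMap A (Localization.Away f) x.snd⟩ := by
  let := inst
  let := inst'
  let := (hinst.map hinst' (algebraMap A (Localization.Away f)) hcompat).toAlgebra
  have := hinst.isLocalization_away f c hinst' hcompat
  let e := IsLocalization.algEquiv (.powers (⟨f, c⟩ : WittPair A))
    (Localization.Away (⟨f, c⟩ : WittPair A)) (WittPair (Localization.Away f))
  exact ⟨e.toRingEquiv, e.commutes⟩

/-- Localization of the twisted Witt ring: for a lift `(f,c) ∈ W₂^φ(A)` of `f ∈ A`,
the natural homomorphism `W₂^φ(A)_{(f,c)} → W₂^{φ'}(A_f)` (where `φ'` is the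
induced splitting of `A_f`) is an isomorphism. -/
theorem twistedWittRing_localization_iso
    (p : ℕ) (hp : p.Prime) (A : Type*) [CommRing A] [CharP A p]
    (φ : A → A) (haddφ : ∀ a b : A, φ (a + b) = φ a + φ b)
    (hsemilinear : ∀ a b : A, φ (a ^ p * b) = a * φ b)
    (hsplit : ∀ a : A, φ (a ^ p) = a)
    (f c : A)
    (inst : CommRing (WittPair A)) (hinst : IsTwistedWittRing p φ inst)
    (φ' : Localization.Away f → Localization.Away f)
    (haddφ' : ∀ a b : Localization.Away f, φ' (a + b) = φ' a + φ' b)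
    (hsemilinear' : ∀ a b : Localization.Away f, φ' (a ^ p * b) = a * φ' b)
    (hsplit' : ∀ a : Localization.Away f, φ' (a ^ p) = a)
    (hcompat : ∀ a : A,
      φ' (algebraMap A (Localization.Away f) a) = algebraMap A (Localization.Away f) (φ a))
    (inst' : CommRing (WittPair (Localization.Away f)))
    (hinst' : IsTwistedWittRing p φ' inst') :
    letI := inst
    letI := inst'
    ∃ e : Localization.Away (⟨f, c⟩ : WittPair A) ≃+* WittPair (Localization.Away f),
      ∀ x : WittPair A,
        e (algebraMap (WittPair A) (Localization.Away (⟨f, c⟩ : WittPair A)) x) =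
          ⟨algebraMap A (Localization.Away f) x.fst,
            algebraMap A (Localization.Away f) x.snd⟩ :=
  twistedWittRing_localization_iso_general p A φ f c inst hinst φ' hcompat inst' hinst'
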